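/- Let y = A x + e with x supported on a set 𝒯 of size at most T, and let T̂ be any index set with |T̂| ≤ T. Define x̂ by x̂_{T̂} = A_{T̂}† y and x̂ = 0 off T̂. If A has restricted isometry constant δ_{3T} < 1, then ‖x − x̂‖ ≤ (1/(1−δ_{3T})) ‖x_{T̂ᶜ}‖ + (1/√(1−δ_{3T})) ‖e‖. -/

import Mathlib

/-!
On `T̂`, the estimate is `pinv B y = x_{T̂} + pinv B (A x_{T̂ᶜ}) + pinv B e` with `B = A_{T̂}`,
so the error is `x_{T̂ᶜ}` minus the zero-padding of `pinv B (A x_{T̂ᶜ} + e)`. Since `B pinv B` is an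
orthogonal projection, `u = pinv B z` satisfies `‖B u‖² = ⟨B u, z⟩`, while RIP gives
`(1 - δ) ‖u‖² ≤ ‖B u‖²`. For `z = e` Cauchy–Schwarz yields `‖u‖ ≤ ‖e‖ / √(1 - δ)`; for
`z = A x_{T̂ᶜ}` restricted orthogonality (`x_{T̂ᶜ}` is supported off `T̂`, on at most `T` indices)
yields `‖u‖ ≤ δ / (1 - δ) ‖x_{T̂ᶜ}‖`, and `1 + δ / (1 - δ) = 1 / (1 - δ)`.
-/

open Matrix Finset

/-- Euclidean (ℓ2) norm of a finitely-indexed real vector. -/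
noncomputable def enorm2 {ι : Type*} [Fintype ι] (x : ι → ℝ) : ℝ :=
  Real.sqrt (∑ i, x i ^ 2)

/-- `x` is `T`-sparse: it has at most `T` nonzero entries. -/
def sparse {N : ℕ} (T : ℕ) (x : Fin N → ℝ) : Prop :=
  (Finset.univ.filter (fun i => x i ≠ 0)).card ≤ T

/-- Support of a vector as a finset. -/
noncomputable def fsupp {N : ℕ} (x : Fin N → ℝ) : Finset (Fin N) :=
  Finset.univ.filter (fun i => x i ≠ 0)

/-- Restricted isometry property with constant `δ` at sparsity level `T`. -/
def RIP {M N : ℕ} (A : Matrix (Fin M) (Fin N) ℝ) (T : ℕ) (δ : ℝ) : Prop :=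
  ∀ x : Fin N → ℝ, sparse T x →
    (1 - δ) * enorm2 x ^ 2 ≤ enorm2 (A.mulVec x) ^ 2 ∧
    enorm2 (A.mulVec x) ^ 2 ≤ (1 + δ) * enorm2 x ^ 2

/-- Column submatrix of `A` indexed by the finset `𝒯`. -/
def cols {M N : ℕ} (A : Matrix (Fin M) (Fin N) ℝ) (𝒯 : Finset (Fin N)) :
    Matrix (Fin M) 𝒯 ℝ := A.submatrix id (fun i => (i : Fin N))

/-- Pseudo-inverse `(Bᵀ B)⁻¹ Bᵀ` (full column rank assumed where used). -/
noncomputable def pinv {M : ℕ} {ι : Type*} [Fintype ι] [DecidableEq ι]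
    (B : Matrix (Fin M) ι ℝ) : Matrix ι (Fin M) ℝ := (Bᵀ * B)⁻¹ * Bᵀ

/-- `x` restricted to the index set `S` (zero off `S`). -/
def restr {N : ℕ} (x : Fin N → ℝ) (S : Finset (Fin N)) : Fin N → ℝ :=
  fun i => if i ∈ S then x i else 0

/-- Zero-pad a vector indexed by `S` to a full-length vector. -/
noncomputable def scatter {N : ℕ} (S : Finset (Fin N)) (v : S → ℝ) : Fin N → ℝ :=
  fun i => if h : i ∈ S then v ⟨i, h⟩ else 0

section Norm

variable {ι : Type*} [Fintype ι]

theorem enorm2_eq_norm (x : ι → ℝ) : enorm2 x = ‖WithLp.toLp 2 x‖ := by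
  simp [enorm2, EuclideanSpace.norm_eq]

theorem enorm2_nonneg (x : ι → ℝ) : 0 ≤ enorm2 x := Real.sqrt_nonneg _

theorem enorm2_sq (x : ι → ℝ) : enorm2 x ^ 2 = x ⬝ᵥ x := by
  rw [enorm2, Real.sq_sqrt (by positivity)]
  simp only [dotProduct, sq]

theorem enorm2_add_le (x y : ι → ℝ) : enorm2 (x + y) ≤ enorm2 x + enorm2 y := by
  simpa only [enorm2_eq_norm, WithLp.toLp_add] using norm_add_le _ _

theorem enorm2_sub_le (x y : ι → ℝ) : enorm2 (x - y) ≤ enorm2 x + enorm2 y := by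
  simpa only [enorm2_eq_norm, WithLp.toLp_sub] using norm_sub_le _ _

theorem dotProduct_le_enorm2_mul (x y : ι → ℝ) : x ⬝ᵥ y ≤ enorm2 x * enorm2 y := by
  simpa only [enorm2_eq_norm, EuclideanSpace.inner_toLp_toLp, star_trivial, dotProduct_comm y]
    using real_inner_le_norm (WithLp.toLp 2 x) (WithLp.toLp 2 y)

theorem enorm2_pos {x : ι → ℝ} (hx : x ≠ 0) : 0 < enorm2 x := by
  simpa [enorm2_eq_norm] using hx

theorem enorm2_smul_add_smul_sq (c d : ℝ) (x y : ι → ℝ) :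
    enorm2 (c • x + d • y) ^ 2 =
      c ^ 2 * enorm2 x ^ 2 + 2 * c * d * (x ⬝ᵥ y) + d ^ 2 * enorm2 y ^ 2 := by
  simp only [enorm2_sq, add_dotProduct, dotProduct_add, smul_dotProduct, dotProduct_smul,
    smul_eq_mul, dotProduct_comm y x]
  ring

end Norm

section Scatter

variable {M N : ℕ}

@[simp]
theorem scatter_coe (S : Finset (Fin N)) (v : S → ℝ) (j : S) : scatter S v j = v j := by
  simp [scatter]

theorem scatter_of_notMem {S : Finset (Fin N)} (v : S → ℝ) {i : Fin N} (hi : i ∉ S) :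
    scatter S v i = 0 := by
  simp [scatter, hi]

theorem scatter_add (S : Finset (Fin N)) (v w : S → ℝ) :
    scatter S (v + w) = scatter S v + scatter S w := by
  ext i
  by_cases hi : i ∈ S <;> simp [scatter, hi]

theorem enorm2_scatter (S : Finset (Fin N)) (v : S → ℝ) : enorm2 (scatter S v) = enorm2 v := by
  rw [enorm2, enorm2, ← Fintype.sum_subset (s := S) fun i hi => by_contra fun hiS => hi <| by
    rw [scatter_of_notMem v hiS, sq, mul_zero], ← Finset.sum_coe_sort]
  simp only [scatter_coe]

theorem mulVec_scatter (A : Matrix (Fin M) (Fin N) ℝ) (S : Finset (Fin N)) (v : S → ℝ) :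
    A *ᵥ scatter S v = cols A S *ᵥ v := by
  ext m
  rw [mulVec, dotProduct, ← Fintype.sum_subset (s := S) fun i hi => by_contra fun hiS => hi <| by
    rw [scatter_of_notMem v hiS, mul_zero], ← Finset.sum_coe_sort]
  simp [cols, mulVec, dotProduct]

theorem scatter_add_restr_compl (x : Fin N → ℝ) (S : Finset (Fin N)) :
    scatter S (fun j => x j) + restr x Sᶜ = x := by
  ext i
  by_cases hi : i ∈ S <;> simp [scatter, restr, hi]

theorem sparse_of_forall_notMem {T : ℕ} {v : Fin N → ℝ} {U : Finset (Fin N)}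
    (hv : ∀ i ∉ U, v i = 0) (hU : U.card ≤ T) : sparse T v :=
  (Finset.card_le_card fun i hi => by_contra fun hiU => by
    simp [hv i hiU] at hi).trans hU

end Scatter

section LeastSquares

variable {M : ℕ} {ι : Type*} [Fintype ι] [DecidableEq ι] {B : Matrix (Fin M) ι ℝ} {c : ℝ}

theorem isUnit_det_transpose_mul_self (hc : 0 < c)
    (hB : ∀ w, c * enorm2 w ^ 2 ≤ enorm2 (B *ᵥ w) ^ 2) : IsUnit (Bᵀ * B).det := by
  have hinj : Function.Injective B.mulVec := fun v w hvw => by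
    have h := hB (v - w)
    rw [mulVec_sub, hvw, sub_self, enorm2_sq, enorm2_sq, dotProduct_zero] at h
    have : (v - w) ⬝ᵥ (v - w) ≤ 0 := nonpos_of_mul_nonpos_right h hc
    exact sub_eq_zero.1 (dotProduct_self_eq_zero.1 (this.antisymm (dotProduct_self_star_nonneg _)))
  have hpd := PosDef.conjTranspose_mul_self B hinj
  rw [conjTranspose_eq_transpose_of_trivial] at hpd
  exact hpd.det_pos.ne'.isUnit

theorem pinv_mulVec_mulVec (hB : IsUnit (Bᵀ * B).det) (v : ι → ℝ) : pinv B *ᵥ (B *ᵥ v) = v := by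
  rw [pinv, mulVec_mulVec, Matrix.mul_assoc, nonsing_inv_mul _ hB, one_mulVec]

/-- `B (pinv B)` is the orthogonal projection onto the range of `B`. -/
theorem enorm2_mulVec_pinv_mulVec_sq (hB : IsUnit (Bᵀ * B).det) (z : Fin M → ℝ) :
    enorm2 (B *ᵥ (pinv B *ᵥ z)) ^ 2 = B *ᵥ (pinv B *ᵥ z) ⬝ᵥ z := by
  have hnormal : Bᵀ *ᵥ (B *ᵥ (pinv B *ᵥ z)) = Bᵀ *ᵥ z := by
    rw [pinv, mulVec_mulVec, mulVec_mulVec, ← Matrix.mul_assoc, mul_nonsing_inv _ hB,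
      Matrix.one_mul]
  calc enorm2 (B *ᵥ (pinv B *ᵥ z)) ^ 2
      = pinv B *ᵥ z ⬝ᵥ Bᵀ *ᵥ (B *ᵥ (pinv B *ᵥ z)) := by
        rw [enorm2_sq, dotProduct_mulVec (pinv B *ᵥ z), vecMul_transpose]
    _ = B *ᵥ (pinv B *ᵥ z) ⬝ᵥ z := by
        rw [hnormal, dotProduct_mulVec, vecMul_transpose]

theorem enorm2_pinv_mulVec_le (hc : 0 < c) (hB : ∀ w, c * enorm2 w ^ 2 ≤ enorm2 (B *ᵥ w) ^ 2)
    (z : Fin M → ℝ) : enorm2 (pinv B *ᵥ z) ≤ enorm2 z / √c := by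
  set u := pinv B *ᵥ z
  have hproj := enorm2_mulVec_pinv_mulVec_sq (isUnit_det_transpose_mul_self hc hB) z
  have hBu : enorm2 (B *ᵥ u) ≤ enorm2 z := by
    have := dotProduct_le_enorm2_mul (B *ᵥ u) z
    nlinarith [enorm2_nonneg (B *ᵥ u), enorm2_nonneg z]
  rw [le_div_iff₀ (Real.sqrt_pos.2 hc)]
  refine (pow_le_pow_iff_left₀ (mul_nonneg (enorm2_nonneg u) (Real.sqrt_nonneg c))
    (enorm2_nonneg z) two_ne_zero).1 ?_
  calc (enorm2 u * √c) ^ 2 = c * enorm2 u ^ 2 := by rw [mul_pow, Real.sq_sqrt hc.le, mul_comm]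
    _ ≤ enorm2 (B *ᵥ u) ^ 2 := hB u
    _ ≤ enorm2 z ^ 2 := pow_le_pow_left₀ (enorm2_nonneg _) hBu 2

end LeastSquares

namespace RIP

variable {M N k : ℕ} {A : Matrix (Fin M) (Fin N) ℝ} {δ : ℝ}

theorem le_enorm2_cols_mulVec_sq (hA : RIP A k δ) {S : Finset (Fin N)} (hS : S.card ≤ k)
    (v : S → ℝ) : (1 - δ) * enorm2 v ^ 2 ≤ enorm2 (cols A S *ᵥ v) ^ 2 := by
  simpa only [enorm2_scatter, mulVec_scatter] using
    (hA _ (sparse_of_forall_notMem (fun i hi => scatter_of_notMem v hi) hS)).1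

/-- Restricted orthogonality: polarize `A (‖b‖ a ± ‖a‖ b)`, whose norms RIP controls. -/
theorem dotProduct_mulVec_le (hA : RIP A k δ) {a b : Fin N → ℝ} {S U : Finset (Fin N)}
    (ha : ∀ i ∉ S, a i = 0) (hb : ∀ i ∉ U, b i = 0) (hSU : Disjoint S U)
    (hk : (S ∪ U).card ≤ k) : A *ᵥ a ⬝ᵥ A *ᵥ b ≤ δ * enorm2 a * enorm2 b := by
  have hab : a ⬝ᵥ b = 0 := Finset.sum_eq_zero fun i _ => by
    by_cases hi : i ∈ S
    · rw [hb i (Finset.disjoint_left.1 hSU hi), mul_zero]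
    · rw [ha i hi, zero_mul]
  have hsparse (c d : ℝ) : sparse k (c • a + d • b) := sparse_of_forall_notMem (fun i hi => by
    simp only [Finset.mem_union, not_or] at hi
    simp [ha i hi.1, hb i hi.2]) hk
  rcases eq_or_ne a 0 with rfl | ha0
  · simp [enorm2_eq_norm]
  rcases eq_or_ne b 0 with rfl | hb0
  · simp [enorm2_eq_norm]
  have hα := enorm2_pos ha0
  have hβ := enorm2_pos hb0
  have hsum := (hA _ (hsparse (enorm2 b) (enorm2 a))).2
  have hdiff := (hA _ (hsparse (enorm2 b) (-enorm2 a))).1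
  simp only [mulVec_add, mulVec_smul, enorm2_smul_add_smul_sq, hab] at hsum hdiff
  have key : enorm2 a * enorm2 b * (A *ᵥ a ⬝ᵥ A *ᵥ b) ≤
      enorm2 a * enorm2 b * (δ * enorm2 a * enorm2 b) := by
    linear_combination (hsum + hdiff) / 4
  exact le_of_mul_le_mul_left key (mul_pos hα hβ)

theorem enorm2_pinv_cols_mulVec_le (hA : RIP A k δ) (hδ0 : 0 ≤ δ) (hδ1 : δ < 1)
    {S U : Finset (Fin N)} {r : Fin N → ℝ} (hrS : ∀ i ∈ S, r i = 0) (hrU : ∀ i ∉ U, r i = 0)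
    (hk : (S ∪ U).card ≤ k) :
    enorm2 (pinv (cols A S) *ᵥ (A *ᵥ r)) ≤ δ / (1 - δ) * enorm2 r := by
  set u := pinv (cols A S) *ᵥ (A *ᵥ r)
  have hlow := hA.le_enorm2_cols_mulVec_sq ((Finset.card_le_card Finset.subset_union_left).trans hk)
  have hproj : enorm2 (cols A S *ᵥ u) ^ 2 = cols A S *ᵥ u ⬝ᵥ A *ᵥ r :=
    enorm2_mulVec_pinv_mulVec_sq (isUnit_det_transpose_mul_self (sub_pos.2 hδ1) hlow) (A *ᵥ r)
  have horth := hA.dotProduct_mulVec_le (a := scatter S u) (b := r) (U := U \ S)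
    (fun i hi => scatter_of_notMem u hi)
    (fun i hi => by
      rw [Finset.mem_sdiff, not_and_not_right] at hi
      by_cases hiU : i ∈ U
      · exact hrS i (hi hiU)
      · exact hrU i hiU)
    Finset.disjoint_sdiff (by rwa [Finset.union_sdiff_self_eq_union])
  rw [mulVec_scatter, enorm2_scatter, ← hproj] at horth
  have key : (1 - δ) * enorm2 u ^ 2 ≤ δ * enorm2 u * enorm2 r := (hlow u).trans horth
  rw [div_mul_eq_mul_div, le_div_iff₀ (sub_pos.2 hδ1)]
  rcases (enorm2_nonneg u).eq_or_lt with hu | hu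
  · rw [← hu, zero_mul]
    exact mul_nonneg hδ0 (enorm2_nonneg r)
  · nlinarith

end RIP

theorem sub_scatter_pinv_cols_mulVec {M N : ℕ} {A : Matrix (Fin M) (Fin N) ℝ}
    {S : Finset (Fin N)} (hB : IsUnit ((cols A S)ᵀ * cols A S).det)
    (x : Fin N → ℝ) (e : Fin M → ℝ) :
    x - scatter S (pinv (cols A S) *ᵥ (A *ᵥ x + e)) =
      restr x Sᶜ - scatter S (pinv (cols A S) *ᵥ (A *ᵥ restr x Sᶜ + e)) := by
  have hAx : A *ᵥ x = cols A S *ᵥ (fun j => x j) + A *ᵥ restr x Sᶜ := by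
    rw [← mulVec_scatter, ← mulVec_add, scatter_add_restr_compl]
  rw [hAx, add_assoc, mulVec_add, pinv_mulVec_mulVec hB, scatter_add]
  nth_rw 1 [← scatter_add_restr_compl x S]
  abel

theorem stmt5 {M N T : ℕ} (A : Matrix (Fin M) (Fin N) ℝ) (δ : ℝ)
    (hδ0 : 0 ≤ δ) (hδ1 : δ < 1) (hRIP : RIP A (3 * T) δ)
    (x : Fin N → ℝ) (e y : Fin M → ℝ) (𝒯 That : Finset (Fin N))
    (hsupp : fsupp x ⊆ 𝒯) (h𝒯 : 𝒯.card ≤ T) (hThat : That.card ≤ T)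
    (hy : y = A.mulVec x + e) :
    enorm2 (x - scatter That ((pinv (cols A That)).mulVec y)) ≤
      (1 / (1 - δ)) * enorm2 (restr x Thatᶜ) +
      (1 / Real.sqrt (1 - δ)) * enorm2 e := by
  have hlow := hRIP.le_enorm2_cols_mulVec_sq (S := That) (by omega)
  have hB := isUnit_det_transpose_mul_self (sub_pos.2 hδ1) hlow
  have hrS : ∀ i ∈ That, restr x Thatᶜ i = 0 := fun i hi => by simp [restr, hi]
  have hrU : ∀ i ∉ 𝒯, restr x Thatᶜ i = 0 := fun i hi => by
    have : x i = 0 := by_contra fun h => hi (hsupp (by simp [fsupp, h]))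
    simp [restr, this]
  have hres := hRIP.enorm2_pinv_cols_mulVec_le hδ0 hδ1 hrS hrU
    ((Finset.card_union_le _ _).trans (by omega))
  have hnoise := enorm2_pinv_mulVec_le (sub_pos.2 hδ1) hlow e
  rw [hy, sub_scatter_pinv_cols_mulVec hB, mulVec_add]
  grw [enorm2_sub_le, enorm2_scatter, enorm2_add_le, hres, hnoise]
  refine le_of_eq ?_
  field_simp [(sub_pos.2 hδ1).ne']
  ring
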